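/- arXiv:2305.02854 — 2 statements merged into one kernel-verified Lean document; each statement's English description precedes it below -/
import Mathlib

section
/- Let δ be a truncated exponential random variable with parameter λ > 0 (density λe^{-λy}/(1-e^{-λ}) on [0,1]). For ρ, γ, ε ≥ 0 with ρ - 2ε ≥ 0 and ρ + 2ε ≤ 1, P[ρ - 2ε ≤ δ ≤ ρ + 2γ] ≤ (1 - e^{-2(γ+ε)λ}) · e^{4ελ} · (P[δ > ρ + 2ε] + e^{-λ}/(1 - e^{-λ})). -/
/-!
Dominating the truncated density by the untruncated one `l e^{-ly}/(1-e^{-l})` gives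
`P[a ≤ δ ≤ b] ≤ (e^{-la} - e^{-lb})/(1-e^{-l})`, while for `t ∈ [0,1]` the tail satisfies
`P[δ > t] + e^{-l}/(1-e^{-l}) = e^{-lt}/(1-e^{-l})`, the last summand being the untruncated
mass beyond `1`. The theorem is then the factorisation
`e^{-l(ρ-2ε)} - e^{-l(ρ+2γ)} = (1 - e^{-2(γ+ε)l}) e^{4εl} e^{-l(ρ+2ε)}`.
-/

open MeasureTheory Real

/-- Density of the truncated exponential distribution `Texp l` on `[0,1]`. -/
noncomputable def texpDensity (l y : ℝ) : ℝ :=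
  if y ∈ Set.Icc (0:ℝ) 1 then l * Real.exp (-l * y) / (1 - Real.exp (-l)) else 0

/-- The truncated exponential distribution on `[0,1]` with parameter `l`. -/
noncomputable def texpMeasure (l : ℝ) : Measure ℝ :=
  volume.withDensity fun y => ENNReal.ofReal (texpDensity l y)

noncomputable def expDensity (l y : ℝ) : ℝ :=
  l * Real.exp (-l * y) / (1 - Real.exp (-l))

lemma one_sub_exp_neg_pos {l : ℝ} (hl : 0 < l) : 0 < 1 - Real.exp (-l) := by
  have : Real.exp (-l) < 1 := Real.exp_lt_one_iff.mpr (neg_lt_zero.mpr hl)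
  linarith

lemma continuous_expDensity (l : ℝ) : Continuous (expDensity l) := by
  unfold expDensity
  fun_prop

lemma expDensity_nonneg {l : ℝ} (hl : 0 < l) (y : ℝ) : 0 ≤ expDensity l y :=
  div_nonneg (mul_nonneg hl.le (Real.exp_pos _).le) (one_sub_exp_neg_pos hl).le

lemma integral_mul_exp_neg_mul (l a b : ℝ) :
    ∫ y in a..b, l * Real.exp (-l * y) = Real.exp (-l * a) - Real.exp (-l * b) := by
  have hderiv : ∀ y ∈ Set.uIcc a b,
      HasDerivAt (fun y => -Real.exp (-l * y)) (l * Real.exp (-l * y)) y := by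
    intro y _
    have := (Real.hasDerivAt_exp (-l * y)).comp y ((hasDerivAt_id y).const_mul (-l))
    simpa [mul_comm, Function.comp_def, Pi.neg_def] using this.neg
  rw [intervalIntegral.integral_eq_sub_of_hasDerivAt hderiv
    ((Continuous.intervalIntegrable (by fun_prop)) a b)]
  ring

lemma lintegral_expDensity_Ioc {l a b : ℝ} (hl : 0 < l) (hab : a ≤ b) :
    ∫⁻ y in Set.Ioc a b, ENNReal.ofReal (expDensity l y)
      = ENNReal.ofReal ((Real.exp (-l * a) - Real.exp (-l * b)) / (1 - Real.exp (-l))) := by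
  rw [← ofReal_integral_eq_lintegral_ofReal (continuous_expDensity l).integrableOn_Ioc
    (Filter.Eventually.of_forall (expDensity_nonneg hl)), ← intervalIntegral.integral_of_le hab]
  unfold expDensity
  rw [intervalIntegral.integral_div, integral_mul_exp_neg_mul]

lemma texpMeasure_apply (l : ℝ) {s : Set ℝ} (hs : MeasurableSet s) :
    texpMeasure l s = ∫⁻ y in s ∩ Set.Icc 0 1, ENNReal.ofReal (expDensity l y) := by
  have hdens : (fun y => ENNReal.ofReal (texpDensity l y))
      = (Set.Icc (0:ℝ) 1).indicator fun y => ENNReal.ofReal (expDensity l y) := by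
    ext y
    by_cases hy : y ∈ Set.Icc (0:ℝ) 1 <;> simp [texpDensity, expDensity, hy]
  rw [texpMeasure, withDensity_apply _ hs, hdens, lintegral_indicator measurableSet_Icc,
    Measure.restrict_restrict measurableSet_Icc, Set.inter_comm]

lemma texpMeasure_Icc_le {l a b : ℝ} (hl : 0 < l) (hab : a ≤ b) :
    texpMeasure l (Set.Icc a b)
      ≤ ENNReal.ofReal ((Real.exp (-l * a) - Real.exp (-l * b)) / (1 - Real.exp (-l))) := by
  rw [texpMeasure_apply l measurableSet_Icc, ← lintegral_expDensity_Ioc hl hab,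
    setLIntegral_congr Ioc_ae_eq_Icc]
  exact lintegral_mono_set Set.inter_subset_left

lemma texpMeasure_Ioi_add {l t : ℝ} (hl : 0 < l) (ht₀ : 0 ≤ t) (ht₁ : t ≤ 1) :
    texpMeasure l (Set.Ioi t) + ENNReal.ofReal (Real.exp (-l) / (1 - Real.exp (-l)))
      = ENNReal.ofReal (Real.exp (-l * t) / (1 - Real.exp (-l))) := by
  have hD := one_sub_exp_neg_pos hl
  have htail : Real.exp (-l) ≤ Real.exp (-l * t) := Real.exp_le_exp.mpr (by nlinarith)
  have hset : Set.Ioi t ∩ Set.Icc 0 1 = Set.Ioc t 1 := by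
    rw [← Set.Ici_inter_Iic, ← Set.inter_assoc,
      Set.inter_eq_left.mpr (Set.Ioi_subset_Ici ht₀), Set.Ioi_inter_Iic]
  rw [texpMeasure_apply l measurableSet_Ioi, hset, lintegral_expDensity_Ioc hl ht₁, mul_one,
    ← ENNReal.ofReal_add (div_nonneg (sub_nonneg.mpr htail) hD.le) (by positivity)]
  congr 1
  ring

theorem stmt_3_general (l ρ γ ε : ℝ) (hl : 0 < l) (hρ : 0 ≤ ρ) (hγ : 0 ≤ γ) (hε : 0 ≤ ε)
    (h2 : ρ + 2 * ε ≤ 1) :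
    texpMeasure l (Set.Icc (ρ - 2 * ε) (ρ + 2 * γ)) ≤
      ENNReal.ofReal ((1 - Real.exp (-2 * (γ + ε) * l)) * Real.exp (4 * ε * l)) *
        (texpMeasure l {y : ℝ | ρ + 2 * ε < y} +
          ENNReal.ofReal (Real.exp (-l) / (1 - Real.exp (-l)))) := by
  have hfactor : Real.exp (-l * (ρ - 2 * ε)) - Real.exp (-l * (ρ + 2 * γ))
      = (1 - Real.exp (-2 * (γ + ε) * l)) * Real.exp (4 * ε * l)
          * Real.exp (-l * (ρ + 2 * ε)) := by
    simp only [sub_mul, one_mul, ← Real.exp_add]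
    ring_nf
  have hfactor_nonneg : 0 ≤ (1 - Real.exp (-2 * (γ + ε) * l)) * Real.exp (4 * ε * l) :=
    mul_nonneg (sub_nonneg.mpr (Real.exp_le_one_iff.mpr (by nlinarith))) (Real.exp_pos _).le
  calc texpMeasure l (Set.Icc (ρ - 2 * ε) (ρ + 2 * γ))
      ≤ ENNReal.ofReal ((Real.exp (-l * (ρ - 2 * ε)) - Real.exp (-l * (ρ + 2 * γ)))
          / (1 - Real.exp (-l))) := texpMeasure_Icc_le hl (by linarith)
    _ = ENNReal.ofReal ((1 - Real.exp (-2 * (γ + ε) * l)) * Real.exp (4 * ε * l)) *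
          ENNReal.ofReal (Real.exp (-l * (ρ + 2 * ε)) / (1 - Real.exp (-l))) := by
        rw [← ENNReal.ofReal_mul hfactor_nonneg, hfactor, mul_div_assoc]
    _ = _ := by rw [← texpMeasure_Ioi_add hl (by linarith) h2]; rfl

theorem stmt_3 (l ρ γ ε : ℝ) (hl : 0 < l) (hρ : 0 ≤ ρ) (hγ : 0 ≤ γ) (hε : 0 ≤ ε)
    (h1 : 0 ≤ ρ - 2 * ε) (h2 : ρ + 2 * ε ≤ 1) :
    texpMeasure l (Set.Icc (ρ - 2 * ε) (ρ + 2 * γ)) ≤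
      ENNReal.ofReal ((1 - Real.exp (-2 * (γ + ε) * l)) * Real.exp (4 * ε * l)) *
        (texpMeasure l {y : ℝ | ρ + 2 * ε < y} +
          ENNReal.ofReal (Real.exp (-l) / (1 - Real.exp (-l)))) :=
  stmt_3_general l ρ γ ε hl hρ hγ hε h2
end

section
/- Let (V, dist) be a metric space, X a finite set of centers with |X| ≥ 2, w : X → ℝ, D(x, u) := w(x) + dist(x, u). Fix v ∈ V, let x₁ minimize D(·, v) and Υ := min_{x ≠ x₁} D(x, v) − D(x₁, v). Let Δ > 0, ε ≥ 0, and suppose Υ ≥ 2εΔ. Then for every u ∈ V with dist(v, u) < (Υ − 2εΔ)/2, and every x' ≠ x₁: D(x', u) > D(x₁, u) + εΔ; moreover if additionally D(x₁, u) ≤ Δ, then D(x', u) > (1 + ε)·D(x₁, u). -/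
theorem stmt_8 {V : Type*} [MetricSpace V] [DecidableEq V] (X : Finset V) (w : V → ℝ)
    (v x₁ : V) (hx₁ : x₁ ∈ X) (hne : (X.erase x₁).Nonempty)
    (hmin : ∀ x ∈ X, w x₁ + dist x₁ v ≤ w x + dist x v)
    (Υ Δ ε : ℝ) (hΔ : 0 < Δ) (hε : 0 ≤ ε)
    (hΥ : Υ = (X.erase x₁).inf' hne (fun x => w x + dist x v) - (w x₁ + dist x₁ v))
    (hΥbig : Υ ≥ 2 * ε * Δ) :
    ∀ u : V, dist v u < (Υ - 2 * ε * Δ) / 2 →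
      ∀ x' ∈ X, x' ≠ x₁ →
        (w x' + dist x' u > (w x₁ + dist x₁ u) + ε * Δ) ∧
        (w x₁ + dist x₁ u ≤ Δ →
          w x' + dist x' u > (1 + ε) * (w x₁ + dist x₁ u)) := by
  intro u hu x' hx' hx'ne
  have hinf : (X.erase x₁).inf' hne (fun x => w x + dist x v) ≤ w x' + dist x' v :=
    Finset.inf'_le _ (Finset.mem_erase.mpr ⟨hx'ne, hx'⟩)
  have h1 : w x₁ + dist x₁ v + Υ ≤ w x' + dist x' v := by
    rw [hΥ]; linarith
  have h2 : dist x' v ≤ dist x' u + dist u v := dist_triangle x' u v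
  have h3 : dist x₁ u ≤ dist x₁ v + dist v u := dist_triangle x₁ v u
  have h4 : dist u v = dist v u := dist_comm u v
  have key : w x' + dist x' u > (w x₁ + dist x₁ u) + ε * Δ := by nlinarith
  refine ⟨key, fun hle => ?_⟩
  nlinarith [mul_le_mul_of_nonneg_left hle hε]
end
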